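/- Let Q and k be positive reals and define g(x,y) = Q·x·y + x(k−x)/2 + y(k−y)/2. If 0 < Q ≤ 1/2, then for all x,y ∈ [0,k] we have g(x,y) ≤ k²/(4(1−Q)), and g(k/(2(1−Q)), k/(2(1−Q))) = k²/(4(1−Q)). If 1/2 < Q < 1, then for all x,y ∈ [0,k] we have g(x,y) ≤ Q·k², and g(k,k) = Q·k². -/

import Mathlib

/-!
In the coordinates `s = x + y`, `d = x - y`,
`g = k s / 2 - (1 - Q) s² / 4 - (1 + Q) d² / 4`, so for `-1 ≤ Q < 1` completing the square in `s`
bounds `g` by `k² / (4 (1 - Q))` on all of `ℝ²`, with equality at `x = y = k / (2 (1 - Q))`.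
For `Q ≥ 1/2` that point leaves the square `[0, k]²`, and there
`Q k² - g = (Q - 1/2) (k² - x y) + ((k - x)² + (k - y)² + (x - y)²) / 4 ≥ 0`.
-/

noncomputable section

namespace PaperStmt

/-- The function `g(x,y) = Q·x·y + x(k−x)/2 + y(k−y)/2`. -/
def gfun (Q k x y : ℝ) : ℝ := Q * x * y + x * (k - x) / 2 + y * (k - y) / 2

theorem gfun_eq_sum_sub (Q k x y : ℝ) :
    gfun Q k x y =
      k * (x + y) / 2 - (1 - Q) * (x + y) ^ 2 / 4 - (1 + Q) * (x - y) ^ 2 / 4 := by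
  unfold gfun; ring

theorem gfun_le_of_lt_one {Q : ℝ} (hQ₀ : -1 ≤ Q) (hQ₁ : Q < 1) (k x y : ℝ) :
    gfun Q k x y ≤ k ^ 2 / (4 * (1 - Q)) := by
  have h1Q : 0 < 1 - Q := by linarith
  have complete_square :
      k ^ 2 / (4 * (1 - Q)) - (k * (x + y) / 2 - (1 - Q) * (x + y) ^ 2 / 4) =
        ((1 - Q) * (x + y) - k) ^ 2 / (4 * (1 - Q)) := by
    field_simp; ring
  have hd : 0 ≤ (1 + Q) * (x - y) ^ 2 / 4 := by
    have : 0 ≤ 1 + Q := by linarith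
    positivity
  have hs : 0 ≤ ((1 - Q) * (x + y) - k) ^ 2 / (4 * (1 - Q)) := by positivity
  rw [gfun_eq_sum_sub]
  linarith

theorem gfun_diag_eq {Q : ℝ} (hQ : Q ≠ 1) (k : ℝ) :
    gfun Q k (k / (2 * (1 - Q))) (k / (2 * (1 - Q))) = k ^ 2 / (4 * (1 - Q)) := by
  have : 1 - Q ≠ 0 := sub_ne_zero.mpr hQ.symm
  unfold gfun
  field_simp
  ring

theorem gfun_le_mul_sq {Q k x y : ℝ} (hQ : 1 / 2 ≤ Q) (hxy : x * y ≤ k ^ 2) :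
    gfun Q k x y ≤ Q * k ^ 2 := by
  have key : Q * k ^ 2 - gfun Q k x y =
      (Q - 1 / 2) * (k ^ 2 - x * y) + ((k - x) ^ 2 + (k - y) ^ 2 + (x - y) ^ 2) / 4 := by
    unfold gfun; ring
  have hprod : 0 ≤ (Q - 1 / 2) * (k ^ 2 - x * y) := mul_nonneg (by linarith) (by linarith)
  have hsq : 0 ≤ ((k - x) ^ 2 + (k - y) ^ 2 + (x - y) ^ 2) / 4 := by positivity
  linarith

theorem gfun_self (Q k : ℝ) : gfun Q k k k = Q * k ^ 2 := by
  unfold gfun; ring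

theorem gfun_max (Q k : ℝ) (hQ : 0 < Q) :
    (Q ≤ 1 / 2 →
      (∀ x ∈ Set.Icc (0 : ℝ) k, ∀ y ∈ Set.Icc (0 : ℝ) k,
        gfun Q k x y ≤ k ^ 2 / (4 * (1 - Q))) ∧
      gfun Q k (k / (2 * (1 - Q))) (k / (2 * (1 - Q))) = k ^ 2 / (4 * (1 - Q))) ∧
    (1 / 2 < Q → Q < 1 →
      (∀ x ∈ Set.Icc (0 : ℝ) k, ∀ y ∈ Set.Icc (0 : ℝ) k,
        gfun Q k x y ≤ Q * k ^ 2) ∧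
      gfun Q k k k = Q * k ^ 2) := by
  refine ⟨fun hQ₂ => ⟨?_, gfun_diag_eq (by linarith) k⟩,
    fun hQ₂ _ => ⟨?_, gfun_self Q k⟩⟩
  · exact fun x _ y _ => gfun_le_of_lt_one (by linarith) (by linarith) k x y
  · rintro x ⟨hx₀, hxk⟩ y ⟨hy₀, hyk⟩
    have hxy : x * y ≤ k ^ 2 := by
      rw [sq]; exact mul_le_mul hxk hyk hy₀ (hx₀.trans hxk)
    exact gfun_le_mul_sq hQ₂.le hxy

end PaperStmt
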